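/- Stability under vanishing cost perturbation: Let μ₁ ⪯_c ⋯ ⪯_c μ_n be probability measures on compact subsets of ℝ^d in convex order, let c, p be continuous cost functions on X₁×⋯×X_n, and set c_ε = c + εp. For ε ≥ 0 let Π^M_ε(μ₁,…,μ_n) denote the set of minimizers of ∫ c_ε dπ over π ∈ Π_M(μ₁,…,μ_n). Let ε_k → 0 with ε_k > 0, and for each k let π_k ∈ Π^M_{ε_k}(μ₁,…,μ_n). Then any weak limit π₀ of (a subsequence of) (π_k) belongs to Π^M_0(μ₁,…,μ_n) and moreover minimizes ∫ p dπ over π ∈ Π^M_0(μ₁,…,μ_n). -/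

import Mathlib

/-!
Every measure with marginals `μ i` is concentrated on the compact box `∏ X i`, and on a compact
set a continuous function agrees with a bounded continuous one (Tietze). Hence the integrals of
`c`, of `p` and of the martingale test integrands `g x • (x (i+1) - x i)` pass to the weak limit,
which makes `π₀` a martingale coupling. Optimality is the usual penalization argument: letting
`k → ∞` in `∫ c dπₖ + εₖ ∫ p dπₖ ≤ ∫ c dπ + εₖ ∫ p dπ` shows that `π₀` minimizes `∫ c`; if `π`
also minimizes `∫ c`, the `c`-terms compare the other way, so `∫ p dπₖ ≤ ∫ p dπ` for every `k`.
-/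

open MeasureTheory ProbabilityTheory Filter Topology

noncomputable section

namespace MOT

/-- Euclidean space ℝ^d. -/
abbrev Euc (d : ℕ) : Type := EuclideanSpace ℝ (Fin d)

variable {d : ℕ}

/-- Convex order of measures on ℝ^d: `μ ⪯_c ν` iff `∫ φ dμ ≤ ∫ φ dν` for every
convex function `φ`. -/
def ConvexOrder (μ ν : Measure (Euc d)) : Prop :=
  ∀ φ : Euc d → ℝ, ConvexOn ℝ Set.univ φ → ∫ x, φ x ∂μ ≤ ∫ x, φ x ∂ν

/-- `π` is a two-period martingale coupling of `μ` and `ν`: it has marginals `μ`, `ν`,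
and its disintegration `κ` over the first variable has barycenter `x` at `μ`-a.e. `x`. -/
def IsMartCoupling2 (μ ν : Measure (Euc d)) (π : Measure (Euc d × Euc d)) : Prop :=
  π.map Prod.snd = ν ∧
  ∃ κ : Kernel (Euc d) (Euc d), IsMarkovKernel κ ∧ π = μ ⊗ₘ κ ∧
    ∀ᵐ x ∂μ, ∫ y, y ∂(κ x) = x

/-- `π` is a three-period martingale coupling of `μ₁, μ₂, μ₃`. -/
def IsMartCoupling3 (μ₁ μ₂ μ₃ : Measure (Euc d)) (π : Measure (Euc d × Euc d × Euc d)) : Prop :=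
  π.map (fun q => q.1) = μ₁ ∧
  π.map (fun q => q.2.1) = μ₂ ∧
  π.map (fun q => q.2.2) = μ₃ ∧
  ∃ (κ₁ : Kernel (Euc d) (Euc d)) (κ₂ : Kernel (Euc d × Euc d) (Euc d)),
    IsMarkovKernel κ₁ ∧ IsMarkovKernel κ₂ ∧
    π = ((μ₁ ⊗ₘ κ₁) ⊗ₘ κ₂).map (fun q => (q.1.1, q.1.2, q.2)) ∧
    (∀ᵐ x ∂μ₁, ∫ y, y ∂(κ₁ x) = x) ∧
    (∀ᵐ q ∂(μ₁ ⊗ₘ κ₁), ∫ z, z ∂(κ₂ q) = q.2)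

/-- Membership in `Π̄(F, σX, σZ)`: couplings of `σX` and `σZ` whose disintegration `κ`
over the first variable satisfies `∫ z κ(x, dz) = F x` for `σX`-a.e. `x`. -/
def MemPiBar (F : Euc d → Euc d) (σX σZ : Measure (Euc d))
    (π : Measure (Euc d × Euc d)) : Prop :=
  π.map Prod.snd = σZ ∧
  ∃ κ : Kernel (Euc d) (Euc d), IsMarkovKernel κ ∧ π = σX ⊗ₘ κ ∧
    ∀ᵐ x ∂σX, ∫ z, z ∂(κ x) = F x


/-- `π` is an `(n+1)`-period martingale coupling of the marginals `μ i`: each marginal is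
`μ i`, and for each consecutive pair of indices the conditional expectation of the next
coordinate given all previous ones equals the current coordinate (expressed via bounded
continuous test functions depending only on the first coordinates). -/
def IsMartCouplingN {d n : ℕ} (μ : Fin (n + 1) → Measure (Euc d))
    (π : Measure (Fin (n + 1) → Euc d)) : Prop :=
  (∀ i, π.map (fun x => x i) = μ i) ∧
  ∀ i : Fin n, ∀ g : (Fin (n + 1) → Euc d) → ℝ, Continuous g →
    (∃ C, ∀ x, |g x| ≤ C) →
    (∀ x y : Fin (n + 1) → Euc d, (∀ k, k ≤ i.castSucc → x k = y k) → g x = g y) →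
    ∫ x, g x • (x i.succ - x i.castSucc) ∂π = 0

end MOT

open scoped BoundedContinuousFunction

theorem BoundedContinuousFunction.exists_eqOn_of_isCompact {Ω : Type*} [TopologicalSpace Ω]
    [NormalSpace Ω] [T2Space Ω] {K : Set Ω} (hK : IsCompact K) {f : Ω → ℝ}
    (hf : Continuous f) : ∃ F : Ω →ᵇ ℝ, Set.EqOn F f K := by
  have : CompactSpace K := isCompact_iff_compactSpace.mp hK
  obtain ⟨F, -, hF⟩ := exists_norm_eq_domRestrict_eq_of_closed
    (mkOfCompact ⟨K.domRestrict f, hf.continuousOn.domRestrict⟩) hK.isClosed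
  exact ⟨F, fun x hx => congr($hF ⟨x, hx⟩)⟩

theorem Continuous.integrable_of_ae_mem_isCompact {Ω E : Type*} [TopologicalSpace Ω]
    [MeasurableSpace Ω] [OpensMeasurableSpace Ω] [T2Space Ω] [NormedAddCommGroup E]
    {ν : Measure Ω} [IsFiniteMeasure ν] {K : Set Ω} {f : Ω → E} (hf : Continuous f)
    (hK : IsCompact K) (hν : ∀ᵐ x ∂ν, x ∈ K) : Integrable f ν := by
  rw [← Measure.restrict_eq_self_of_ae_mem hν]
  exact hf.continuousOn.integrableOn_compact hK

theorem ae_mem_univ_pi_of_map_eval_eq {ι : Type*} [Countable ι] {α : ι → Type*}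
    [∀ i, MeasurableSpace (α i)] {π : Measure (∀ i, α i)} {μ : ∀ i, Measure (α i)}
    {X : ∀ i, Set (α i)} (hπ : ∀ i, π.map (fun x => x i) = μ i)
    (hμX : ∀ i, μ i (X i)ᶜ = 0) : ∀ᵐ x ∂π, x ∈ Set.univ.pi X := by
  simp only [Set.mem_univ_pi, ae_all_iff]
  intro i
  have hX : ∀ᵐ v ∂(π.map fun x => x i), v ∈ X i := by rw [hπ i]; exact ae_iff.2 (hμX i)
  exact ae_of_ae_map (measurable_pi_apply i).aemeasurable hX

section WeakConvergence

variable {Ω : Type*} [TopologicalSpace Ω] [MeasurableSpace Ω] {ι : Type*}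

def TendstoWeakly (ν : ι → Measure Ω) (l : Filter ι) (ν₀ : Measure Ω) : Prop :=
  ∀ f : Ω →ᵇ ℝ, Tendsto (fun k => ∫ x, f x ∂ν k) l (𝓝 (∫ x, f x ∂ν₀))

variable {ν : ι → Measure Ω} {l : Filter ι} {ν₀ : Measure Ω}

namespace TendstoWeakly

theorem integral_eq_of_forall_eq [l.NeBot] (h : TendstoWeakly ν l ν₀) {f : Ω →ᵇ ℝ} {a : ℝ}
    (hf : ∀ k, ∫ x, f x ∂ν k = a) : ∫ x, f x ∂ν₀ = a :=
  tendsto_nhds_unique (h f) (tendsto_const_nhds.congr fun k => (hf k).symm)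

theorem isProbabilityMeasure [l.NeBot] [∀ k, IsProbabilityMeasure (ν k)]
    (h : TendstoWeakly ν l ν₀) : IsProbabilityMeasure ν₀ := by
  have h1 : ∫ x, (1 : Ω →ᵇ ℝ) x ∂ν₀ = 1 := h.integral_eq_of_forall_eq fun k => by simp
  refine ⟨(ENNReal.toReal_eq_one_iff _).mp ?_⟩
  simpa [Measure.real] using h1

theorem map_eq [OpensMeasurableSpace Ω] {Ω' : Type*} [TopologicalSpace Ω']
    [MeasurableSpace Ω'] [HasOuterApproxClosed Ω'] [BorelSpace Ω'] [l.NeBot]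
    [IsFiniteMeasure ν₀] {e : Ω → Ω'} (he : Continuous e) {m : Measure Ω'} [IsFiniteMeasure m]
    (hm : ∀ k, (ν k).map e = m) (h : TendstoWeakly ν l ν₀) : ν₀.map e = m := by
  refine ext_of_forall_integral_eq_of_IsFiniteMeasure fun f => ?_
  rw [integral_map he.aemeasurable f.continuous.aestronglyMeasurable]
  refine h.integral_eq_of_forall_eq (f := f.compContinuous ⟨e, he⟩) fun k => ?_
  rw [← hm k, integral_map he.aemeasurable f.continuous.aestronglyMeasurable]
  rfl

theorem tendsto_integral_of_ae_mem_isCompact [NormalSpace Ω] [T2Space Ω]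
    (h : TendstoWeakly ν l ν₀) {K : Set Ω} (hK : IsCompact K) (hν : ∀ k, ∀ᵐ x ∂ν k, x ∈ K)
    (hν₀ : ∀ᵐ x ∂ν₀, x ∈ K) {f : Ω → ℝ} (hf : Continuous f) :
    Tendsto (fun k => ∫ x, f x ∂ν k) l (𝓝 (∫ x, f x ∂ν₀)) := by
  obtain ⟨F, hF⟩ := BoundedContinuousFunction.exists_eqOn_of_isCompact hK hf
  have hFf : ∀ ρ : Measure Ω, (∀ᵐ x ∂ρ, x ∈ K) → ∫ x, F x ∂ρ = ∫ x, f x ∂ρ :=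
    fun ρ hρ => integral_congr_ae (hρ.mono fun x hx => hF hx)
  rw [← hFf ν₀ hν₀]
  exact (h F).congr fun k => hFf _ (hν k)

theorem integral_eq_zero_of_forall_eq_zero [NormalSpace Ω] [T2Space Ω]
    [OpensMeasurableSpace Ω] [l.NeBot] [∀ k, IsFiniteMeasure (ν k)] [IsFiniteMeasure ν₀]
    {E : Type*} [NormedAddCommGroup E] [InnerProductSpace ℝ E] [CompleteSpace E]
    (h : TendstoWeakly ν l ν₀) {K : Set Ω} (hK : IsCompact K) (hν : ∀ k, ∀ᵐ x ∂ν k, x ∈ K)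
    (hν₀ : ∀ᵐ x ∂ν₀, x ∈ K) {f : Ω → E} (hf : Continuous f)
    (hf0 : ∀ k, ∫ x, f x ∂ν k = 0) : ∫ x, f x ∂ν₀ = 0 := by
  refine integral_eq_zero_of_forall_integral_inner_eq_zero ℝ f
    (hf.integrable_of_ae_mem_isCompact hK hν₀) fun w => ?_
  refine tendsto_nhds_unique
    (h.tendsto_integral_of_ae_mem_isCompact hK hν hν₀ (continuous_const.inner hf))
    (tendsto_const_nhds.congr fun k => ?_)
  rw [integral_inner (hf.integrable_of_ae_mem_isCompact hK (hν k)), hf0 k, inner_zero_right]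

end TendstoWeakly

end WeakConvergence

section Penalization

variable {α ι : Type*} {l : Filter ι} {S : Set α} {C P : α → ℝ} {ε : ι → ℝ} {a : ι → α}
  {a₀ : α}

theorem isMinOn_of_tendsto_penalized_minimizers [l.NeBot]
    (hmin : ∀ k, IsMinOn (fun x => C x + ε k * P x) S (a k)) (hε : Tendsto ε l (𝓝 0))
    (hC : Tendsto (C ∘ a) l (𝓝 (C a₀))) (hP : Tendsto (P ∘ a) l (𝓝 (P a₀))) :
    IsMinOn C S a₀ := by
  refine isMinOn_iff.2 fun b hb => ?_
  have hle := le_of_tendsto_of_tendsto (hC.add (hε.mul hP))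
    (tendsto_const_nhds.add (hε.mul tendsto_const_nhds))
    (Eventually.of_forall fun k => hmin k hb)
  simpa only [zero_mul, add_zero] using hle

theorem le_of_tendsto_penalized_minimizers [l.NeBot]
    (hmin : ∀ k, IsMinOn (fun x => C x + ε k * P x) S (a k)) (hε : ∀ k, 0 < ε k)
    (ha : ∀ k, a k ∈ S) (hP : Tendsto (P ∘ a) l (𝓝 (P a₀))) {b : α} (hb : IsMinOn C S b)
    (hbS : b ∈ S) : P a₀ ≤ P b := by
  refine le_of_tendsto hP (Eventually.of_forall fun k => ?_)
  have hpen : C (a k) + ε k * P (a k) ≤ C b + ε k * P b := hmin k hbS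
  have hCb : C b ≤ C (a k) := hb (ha k)
  exact le_of_mul_le_mul_left (by simp only [Function.comp_apply]; linarith) (hε k)

end Penalization

namespace MOT

section

variable {d n : ℕ} {μ : Fin (n + 1) → Measure (Euc d)} [∀ i, IsProbabilityMeasure (μ i)]

theorem IsMartCouplingN.isProbabilityMeasure {π : Measure (Fin (n + 1) → Euc d)}
    (h : IsMartCouplingN μ π) : IsProbabilityMeasure π := by
  have : IsProbabilityMeasure (π.map fun x => x 0) := by rw [h.1 0]; infer_instance
  exact Measure.isProbabilityMeasure_of_map (fun x => x 0)

theorem IsMartCouplingN.of_tendstoWeakly {X : Fin (n + 1) → Set (Euc d)}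
    (hX : ∀ i, IsCompact (X i)) (hμX : ∀ i, μ i (X i)ᶜ = 0) {ι : Type*} {l : Filter ι}
    [l.NeBot] {ν : ι → Measure (Fin (n + 1) → Euc d)} {ν₀ : Measure (Fin (n + 1) → Euc d)}
    (hν : ∀ k, IsMartCouplingN μ (ν k)) (h : TendstoWeakly ν l ν₀) :
    IsMartCouplingN μ ν₀ := by
  have := fun k => (hν k).isProbabilityMeasure
  have := h.isProbabilityMeasure
  have hmarg : ∀ i, ν₀.map (fun x => x i) = μ i :=
    fun i => h.map_eq (continuous_apply i) fun k => (hν k).1 i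
  refine ⟨hmarg, fun i g hg hgb hgdep => ?_⟩
  exact h.integral_eq_zero_of_forall_eq_zero (isCompact_univ_pi hX)
    (fun k => ae_mem_univ_pi_of_map_eval_eq (hν k).1 hμX)
    (ae_mem_univ_pi_of_map_eval_eq hmarg hμX)
    (hg.smul ((continuous_apply _).sub (continuous_apply _)))
    fun k => (hν k).2 i g hg hgb hgdep

end

theorem stability_vanishing_perturbation_general {d n : ℕ}
    (μ : Fin (n + 1) → Measure (Euc d)) [∀ i, IsProbabilityMeasure (μ i)]
    (X : Fin (n + 1) → Set (Euc d)) (hX : ∀ i, IsCompact (X i))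
    (hμX : ∀ i, μ i (X i)ᶜ = 0)
    (c p : (Fin (n + 1) → Euc d) → ℝ) (hc : Continuous c) (hp : Continuous p)
    (ε : ℕ → ℝ) (hεpos : ∀ k, 0 < ε k) (hεlim : Tendsto ε atTop (𝓝 0))
    (πk : ℕ → Measure (Fin (n + 1) → Euc d))
    (hπk : ∀ k, IsMartCouplingN μ (πk k))
    (hπkopt : ∀ k, ∀ π', IsMartCouplingN μ π' →
      ∫ x, (c x + ε k * p x) ∂(πk k) ≤ ∫ x, (c x + ε k * p x) ∂π')
    (φ : ℕ → ℕ) (hφ : StrictMono φ)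
    (π₀ : Measure (Fin (n + 1) → Euc d))
    (hlim : ∀ f : BoundedContinuousFunction (Fin (n + 1) → Euc d) ℝ,
      Tendsto (fun k => ∫ x, f x ∂(πk (φ k))) atTop (𝓝 (∫ x, f x ∂π₀))) :
    IsMartCouplingN μ π₀ ∧
    (∀ π', IsMartCouplingN μ π' → ∫ x, c x ∂π₀ ≤ ∫ x, c x ∂π') ∧
    (∀ π', IsMartCouplingN μ π' →
      (∀ π'', IsMartCouplingN μ π'' → ∫ x, c x ∂π' ≤ ∫ x, c x ∂π'') →
      ∫ x, p x ∂π₀ ≤ ∫ x, p x ∂π') := by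
  have hK : IsCompact (Set.univ.pi X) := isCompact_univ_pi hX
  have hconc : ∀ π, IsMartCouplingN μ π → ∀ᵐ x ∂π, x ∈ Set.univ.pi X :=
    fun π hπ => ae_mem_univ_pi_of_map_eval_eq hπ.1 hμX
  have hint : ∀ {f : (Fin (n + 1) → Euc d) → ℝ}, Continuous f →
      ∀ π, IsMartCouplingN μ π → Integrable f π := fun hf π hπ =>
    have := hπ.isProbabilityMeasure
    hf.integrable_of_ae_mem_isCompact hK (hconc π hπ)
  have hweak : TendstoWeakly (fun k => πk (φ k)) atTop π₀ := hlim
  have hπ₀ : IsMartCouplingN μ π₀ :=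
    IsMartCouplingN.of_tendstoWeakly hX hμX (fun k => hπk (φ k)) hweak
  have hmin : ∀ k, IsMinOn (fun π => ∫ x, c x ∂π + ε (φ k) * ∫ x, p x ∂π)
      {π | IsMartCouplingN μ π} (πk (φ k)) := by
    intro k π hπ
    have hopt := hπkopt (φ k) π hπ
    rwa [integral_add (hint hc _ (hπk _)) ((hint hp _ (hπk _)).const_mul _),
      integral_add (hint hc _ hπ) ((hint hp _ hπ).const_mul _), integral_const_mul,
      integral_const_mul] at hopt
  have hconc_k : ∀ k, ∀ᵐ x ∂πk (φ k), x ∈ Set.univ.pi X := fun k => hconc _ (hπk _)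
  have hC := hweak.tendsto_integral_of_ae_mem_isCompact hK hconc_k (hconc _ hπ₀) hc
  have hP := hweak.tendsto_integral_of_ae_mem_isCompact hK hconc_k (hconc _ hπ₀) hp
  refine ⟨hπ₀, fun π hπ => isMinOn_of_tendsto_penalized_minimizers hmin
    (hεlim.comp hφ.tendsto_atTop) hC hP hπ, fun π hπ hopt => ?_⟩
  exact le_of_tendsto_penalized_minimizers hmin (fun k => hεpos _) (fun k => hπk _) hP
    (isMinOn_iff.2 hopt) hπ

/-- **Stability under a vanishing cost perturbation.** If `π k` minimizes `∫ (c + ε k • p)` over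
the martingale couplings, `ε k > 0`, `ε k → 0`, and a subsequence of `(π k)` converges weakly to
`π₀`, then `π₀` minimizes `∫ c` over the martingale couplings, and among all minimizers of
`∫ c` it minimizes `∫ p`. -/
theorem stability_vanishing_perturbation {d n : ℕ}
    (μ : Fin (n + 1) → Measure (Euc d)) [∀ i, IsProbabilityMeasure (μ i)]
    (X : Fin (n + 1) → Set (Euc d)) (hX : ∀ i, IsCompact (X i))
    (hμX : ∀ i, μ i (X i)ᶜ = 0)
    (hord : ∀ i : Fin n, ConvexOrder (μ i.castSucc) (μ i.succ))
    (c p : (Fin (n + 1) → Euc d) → ℝ) (hc : Continuous c) (hp : Continuous p)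
    (ε : ℕ → ℝ) (hεpos : ∀ k, 0 < ε k) (hεlim : Tendsto ε atTop (𝓝 0))
    (πk : ℕ → Measure (Fin (n + 1) → Euc d))
    (hπk : ∀ k, IsMartCouplingN μ (πk k))
    (hπkopt : ∀ k, ∀ π', IsMartCouplingN μ π' →
      ∫ x, (c x + ε k * p x) ∂(πk k) ≤ ∫ x, (c x + ε k * p x) ∂π')
    (φ : ℕ → ℕ) (hφ : StrictMono φ)
    (π₀ : Measure (Fin (n + 1) → Euc d))
    (hlim : ∀ f : BoundedContinuousFunction (Fin (n + 1) → Euc d) ℝ,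
      Tendsto (fun k => ∫ x, f x ∂(πk (φ k))) atTop (𝓝 (∫ x, f x ∂π₀))) :
    IsMartCouplingN μ π₀ ∧
    (∀ π', IsMartCouplingN μ π' → ∫ x, c x ∂π₀ ≤ ∫ x, c x ∂π') ∧
    (∀ π', IsMartCouplingN μ π' →
      (∀ π'', IsMartCouplingN μ π'' → ∫ x, c x ∂π' ≤ ∫ x, c x ∂π'') →
      ∫ x, p x ∂π₀ ≤ ∫ x, p x ∂π') :=
  stability_vanishing_perturbation_general μ X hX hμX c p hc hp ε hεpos hεlim πk hπk hπkopt φ hφ π₀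
    hlim

end MOT
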